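/- arXiv:2203.16012 — 6 statements merged into one kernel-verified Lean document; each statement's English description precedes it below -/
import Mathlib

section
/- Let H be a Hermitian operator on a finite-dimensional Hilbert space with nondegenerate smallest eigenvalue ε₀ and unit ground state ψ₀. Let P be an orthogonal projection, set δ₁ = ‖(I − P)ψ₀‖ and δ₂ = ‖P H (I − P) ψ₀‖, and assume δ₁ < 1. Let ε₀' be the smallest eigenvalue of the compression of H to the range of P (assumed nonzero). Then ε₀' ≤ ε₀ + 2δ₂/(1 − δ₁²). -/
/-!
The compression `H'` of the Hermitian `H` is again Hermitian, so `ε₀' ‖q‖² ≤ Re ⟪H' q, q⟫` for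
every `q ∈ V`. Take `q = Pψ₀`. Since `Hψ₀ = ε₀ψ₀`, the energy `⟪H Pψ₀, Pψ₀⟫` equals
`ε₀ ‖Pψ₀‖² - ⟪P H (1 - P)ψ₀, Pψ₀⟫`, whose real part is at most `ε₀ ‖Pψ₀‖² + δ₂ ‖Pψ₀‖`.
Dividing by `‖Pψ₀‖² = 1 - δ₁²` (Pythagoras) and using `‖Pψ₀‖ ≤ 1` gives the bound.
-/

section

open RCLike

variable {𝕜 : Type*} [RCLike 𝕜]

theorem LinearMap.IsSymmetric.mul_norm_sq_le_re_inner_apply_self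
    {F : Type*} [NormedAddCommGroup F] [InnerProductSpace 𝕜 F] [FiniteDimensional 𝕜 F]
    {T : F →ₗ[𝕜] F} (hT : T.IsSymmetric) {c : ℝ}
    (hc : c ∈ lowerBounds {r : ℝ | ∃ v : F, ‖v‖ = 1 ∧ T v = (r : 𝕜) • v}) (x : F) :
    c * ‖x‖ ^ 2 ≤ re (inner 𝕜 (T x) x) := by
  rcases eq_or_ne x 0 with rfl | hx
  · simp
  have : Nontrivial F := ⟨⟨x, 0, hx⟩⟩
  obtain ⟨w, hw, hw0⟩ := hT.hasEigenvalue_iInf_of_finiteDimensional.exists_hasEigenvector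
  set μ := ⨅ y : {y : F // y ≠ 0}, re (inner 𝕜 (T y) y) / ‖(y : F)‖ ^ 2
  have hcμ : c ≤ μ := by
    refine hc ⟨(‖w‖⁻¹ : 𝕜) • w, norm_smul_inv_norm hw0, ?_⟩
    rw [map_smul, Module.End.mem_eigenspace_iff.mp hw, smul_comm]
  have hbdd : BddBelow
      (Set.range fun y : {y : F // y ≠ 0} ↦ re (inner 𝕜 (T y) y) / ‖(y : F)‖ ^ 2) :=
    ⟨-‖T.toContinuousLinearMap‖, Set.forall_mem_range.2 fun y ↦
      (abs_le.1 (T.toContinuousLinearMap.rayleighQuotient_le_norm y)).1⟩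
  rw [← le_div_iff₀ (by positivity)]
  exact hcμ.trans (ciInf_le hbdd ⟨x, hx⟩)

section Compression

variable {E : Type*} [NormedAddCommGroup E] [InnerProductSpace 𝕜 E]
  {V : Submodule 𝕜 E} [V.HasOrthogonalProjection] {H : E →ₗ[𝕜] E} {H' : V →ₗ[𝕜] V}

theorem inner_compression_apply_left
    (hH' : ∀ v : V, (H' v : E) = V.orthogonalProjectionOnto (H v)) (x y : V) :
    inner 𝕜 (H' x) y = inner 𝕜 (H x) (y : E) := by
  rw [show H' x = V.orthogonalProjectionOnto (H x) from Subtype.ext (hH' x),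
    Submodule.inner_orthogonalProjectionOnto_eq_of_mem_right]

theorem isSymmetric_compression (hH : H.IsSymmetric)
    (hH' : ∀ v : V, (H' v : E) = V.orthogonalProjectionOnto (H v)) : H'.IsSymmetric := by
  intro x y
  rw [inner_compression_apply_left hH', hH, ← inner_conj_symm, ← inner_conj_symm x,
    inner_compression_apply_left hH']

theorem re_inner_apply_orthogonalProjectionOnto_le {ψ : E} {ε : ℝ} (hψ : H ψ = (ε : 𝕜) • ψ) :
    re (inner 𝕜 (H (V.orthogonalProjectionOnto ψ)) (V.orthogonalProjectionOnto ψ : E)) ≤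
      ε * ‖V.orthogonalProjectionOnto ψ‖ ^ 2 + ‖V.orthogonalProjectionOnto ψ‖ *
        ‖(V.orthogonalProjectionOnto (H (ψ - V.orthogonalProjectionOnto ψ)) : E)‖ := by
  set q := V.orthogonalProjectionOnto ψ
  set z := V.orthogonalProjectionOnto (H (ψ - q))
  have hHq : H q = (ε : 𝕜) • ψ - H (ψ - q) := by rw [map_sub, hψ, sub_sub_cancel]
  have hψq : inner 𝕜 ψ (q : E) = (‖q‖ ^ 2 : ℝ) := by
    rw [← Submodule.inner_orthogonalProjectionOnto_eq_of_mem_right, inner_self_eq_norm_sq_to_K]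
    push_cast; rfl
  have hcross : inner 𝕜 (H (ψ - q)) (q : E) = inner 𝕜 z q := by
    rw [Submodule.inner_orthogonalProjectionOnto_eq_of_mem_right]
  have hz : -re (inner 𝕜 z q) ≤ ‖q‖ * ‖(z : E)‖ := by
    rw [mul_comm]
    exact (neg_le_abs _).trans ((abs_re_le_norm _).trans (norm_inner_le_norm z q))
  rw [hHq, inner_sub_left, inner_smul_real_left, hψq, hcross, map_sub, smul_re, ofReal_re]
  linarith

end Compression

end

theorem truncated_ground_energy_bound_general
    {E : Type*} [NormedAddCommGroup E] [InnerProductSpace ℂ E] [FiniteDimensional ℂ E]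
    (H : E →ₗ[ℂ] E) (hH : H.IsSymmetric)
    (ψ₀ : E) (ε₀ : ℝ) (hψ₀ : ‖ψ₀‖ = 1) (heig : H ψ₀ = (ε₀ : ℂ) • ψ₀)
    (V : Submodule ℂ E)
    (H' : V →ₗ[ℂ] V) (hH' : ∀ v : V, (H' v : E) = (V.orthogonalProjectionOnto (H v) : E))
    (ε₀' : ℝ)
    (hε₀' : IsLeast {r : ℝ | ∃ v : V, ‖v‖ = 1 ∧ H' v = (r : ℂ) • v} ε₀')
    (δ₁ δ₂ : ℝ)
    (hδ₁ : δ₁ = ‖ψ₀ - (V.orthogonalProjectionOnto ψ₀ : E)‖)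
    (hδ₂ : δ₂ = ‖(V.orthogonalProjectionOnto (H (ψ₀ - (V.orthogonalProjectionOnto ψ₀ : E))) : E)‖)
    (hδ₁lt : δ₁ < 1) :
    ε₀' ≤ ε₀ + 2 * δ₂ / (1 - δ₁ ^ 2) := by
  set q := V.orthogonalProjectionOnto ψ₀
  have hrayleigh : ε₀' * ‖q‖ ^ 2 ≤ (inner ℂ (H q) (q : E)).re := by
    rw [← inner_compression_apply_left hH']
    exact (isSymmetric_compression hH hH').mul_norm_sq_le_re_inner_apply_self hε₀'.2 q
  have henergy : (inner ℂ (H q) (q : E)).re ≤ ε₀ * ‖q‖ ^ 2 + ‖q‖ * δ₂ :=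
    hδ₂ ▸ re_inner_apply_orthogonalProjectionOnto_le heig
  have hpythagoras : ‖q‖ ^ 2 = 1 - δ₁ ^ 2 := by
    have := V.norm_sq_eq_add_norm_sq_starProjection ψ₀
    rw [Submodule.starProjection_orthogonal_val, hψ₀] at this
    rw [hδ₁]
    simp only [Submodule.starProjection_apply, Submodule.coe_norm] at this ⊢
    linarith
  have hq_pos : 0 < ‖q‖ ^ 2 := by nlinarith [norm_nonneg (ψ₀ - (q : E))]
  have hq_le : ‖q‖ ≤ 1 := by nlinarith [norm_nonneg q]
  have hδ₂_nonneg : 0 ≤ δ₂ := hδ₂ ▸ norm_nonneg _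
  rw [← hpythagoras, ← sub_le_iff_le_add', le_div_iff₀ hq_pos]
  linarith [mul_le_mul_of_nonneg_right hq_le hδ₂_nonneg]

/-- Robustness of the ground state energy to truncation: if `H'` is the compression of `H`
to the range of the orthogonal projection onto `V`, with `δ₁ = ‖(I−P)ψ₀‖ < 1` and
`δ₂ = ‖P H (I−P) ψ₀‖`, then the lowest eigenvalue `ε₀'` of `H'` satisfies
`ε₀' ≤ ε₀ + 2δ₂/(1−δ₁²)`. -/
theorem truncated_ground_energy_bound
    {E : Type*} [NormedAddCommGroup E] [InnerProductSpace ℂ E] [FiniteDimensional ℂ E]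
    (H : E →ₗ[ℂ] E) (hH : H.IsSymmetric)
    (ψ₀ : E) (ε₀ : ℝ) (hψ₀ : ‖ψ₀‖ = 1) (heig : H ψ₀ = (ε₀ : ℂ) • ψ₀)
    (hmin : ∀ v : E, ‖v‖ = 1 → ε₀ ≤ (inner ℂ v (H v) : ℂ).re)
    (V : Submodule ℂ E) (hV : V ≠ ⊥)
    (H' : V →ₗ[ℂ] V) (hH' : ∀ v : V, (H' v : E) = (V.orthogonalProjectionOnto (H v) : E))
    (ε₀' : ℝ)
    (hε₀' : IsLeast {r : ℝ | ∃ v : V, ‖v‖ = 1 ∧ H' v = (r : ℂ) • v} ε₀')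
    (δ₁ δ₂ : ℝ)
    (hδ₁ : δ₁ = ‖ψ₀ - (V.orthogonalProjectionOnto ψ₀ : E)‖)
    (hδ₂ : δ₂ = ‖(V.orthogonalProjectionOnto (H (ψ₀ - (V.orthogonalProjectionOnto ψ₀ : E))) : E)‖)
    (hδ₁lt : δ₁ < 1) :
    ε₀' ≤ ε₀ + 2 * δ₂ / (1 - δ₁ ^ 2) :=
  truncated_ground_energy_bound_general H hH ψ₀ ε₀ hψ₀ heig V H' hH' ε₀' hε₀' δ₁ δ₂ hδ₁ hδ₂ hδ₁lt
end

section
/- Under the hypotheses of the previous statement, additionally assume the spectral gap condition: all eigenvalues of H other than ε₀ are at least ε₁ = ε₀ + Δ with Δ > 0, and that 2δ₂/(1 − δ₁²) ≤ Δ/2. Then the smallest eigenvalue ε₀' of the compressed operator H' satisfies ε₀' ≤ ε₁' − Δ/2, where ε₁' is the second-smallest eigenvalue of H' (counted with multiplicity); in particular ε₀' is a simple eigenvalue of H' and the compressed operator has spectral gap at least Δ/2. -/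
/-!
Let `φ = Pψ₀`, so that `‖φ‖² = 1 - δ₁²`. Since `Hφ = ε₀ψ₀ - H(ψ₀ - φ)`, the Rayleigh quotient of
`H'` at `φ` is at most `ε₀ + δ₂/(1 - δ₁²) ≤ ε₀ + Δ/4`, and it bounds `ε₀'` from above. By min-max,
some nonzero combination of the first two eigenvectors of `H'` is orthogonal to `ψ₀`; the gap of
`H` then forces `ε₁' ≥ ε₀ + Δ`.
-/

open scoped InnerProductSpace
open RCLike

namespace OrthonormalBasis

variable {𝕜 F ι : Type*} [RCLike 𝕜] [NormedAddCommGroup F] [InnerProductSpace 𝕜 F] [Fintype ι]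
  (b : OrthonormalBasis ι 𝕜 F) {T : F →ₗ[𝕜] F} {μ : ι → ℝ}

theorem inner_apply_eq_mul_inner (hb : ∀ i, T (b i) = (μ i : 𝕜) • b i) (v : F) (i : ι) :
    ⟪b i, T v⟫_𝕜 = μ i * ⟪b i, v⟫_𝕜 := by
  classical
  conv_lhs => rw [← b.sum_repr' v]
  simp [hb, inner_sum, inner_smul_right, b.inner_eq_ite, mul_comm]

theorem re_inner_apply_eq_sum (hb : ∀ i, T (b i) = (μ i : 𝕜) • b i) (v : F) :
    re ⟪v, T v⟫_𝕜 = ∑ i, μ i * ‖⟪b i, v⟫_𝕜‖ ^ 2 := by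
  rw [← b.sum_inner_mul_inner v (T v), map_sum]
  refine Finset.sum_congr rfl fun i _ => ?_
  rw [b.inner_apply_eq_mul_inner hb, ← inner_conj_symm, mul_left_comm, RCLike.conj_mul]
  norm_cast

theorem mul_norm_sq_le_re_inner_apply (hb : ∀ i, T (b i) = (μ i : 𝕜) • b i) {c : ℝ}
    (hc : ∀ i, c ≤ μ i) (v : F) : c * ‖v‖ ^ 2 ≤ re ⟪v, T v⟫_𝕜 := by
  rw [b.re_inner_apply_eq_sum hb, ← b.sum_sq_norm_inner_right, Finset.mul_sum]
  gcongr with i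
  exact hc i

theorem re_inner_apply_le_mul_norm_sq (hb : ∀ i, T (b i) = (μ i : 𝕜) • b i) {c : ℝ} {v : F}
    (hv : ∀ i, c < μ i → ⟪b i, v⟫_𝕜 = 0) : re ⟪v, T v⟫_𝕜 ≤ c * ‖v‖ ^ 2 := by
  rw [b.re_inner_apply_eq_sum hb, ← b.sum_sq_norm_inner_right, Finset.mul_sum]
  refine Finset.sum_le_sum fun i _ => ?_
  rcases le_or_gt (μ i) c with hi | hi
  · gcongr
  · simp [hv i hi]

theorem le_of_mul_norm_sq_le_re_inner_on_ker
    (hb : ∀ i, T (b i) = (μ i : 𝕜) • b i) (f : F →ₗ[𝕜] 𝕜) {c : ℝ}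
    (hc : ∀ v, f v = 0 → c * ‖v‖ ^ 2 ≤ re ⟪v, T v⟫_𝕜) {i j : ι} (hij : i ≠ j)
    (hμ : μ i ≤ μ j) : c ≤ μ j := by
  classical
  set g : 𝕜 × 𝕜 →ₗ[𝕜] F :=
    (LinearMap.toSpanSingleton 𝕜 F (b i)).coprod (LinearMap.toSpanSingleton 𝕜 F (b j))
  -- a linear form on `𝕜²` has a nonzero kernel
  obtain ⟨⟨x, y⟩, hxy, hxy0⟩ := Submodule.exists_mem_ne_zero_of_ne_bot
    (LinearMap.ker_ne_bot_of_finrank_lt (f := f ∘ₗ g) (by simp))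
  set w := x • b i + y • b j
  have hcoef : ∀ k, ⟪b k, w⟫_𝕜 = (if k = i then x else 0) + (if k = j then y else 0) := by
    intro k
    simp [w, inner_add_right, inner_smul_right, b.inner_eq_ite, eq_comm]
  have hw : w ≠ 0 := by
    intro hw
    have hx := hcoef i
    have hy := hcoef j
    simp [hw, hij, hij.symm] at hx hy
    exact hxy0 (by simp [← hx, ← hy])
  have hupper : re ⟪w, T w⟫_𝕜 ≤ μ j * ‖w‖ ^ 2 := by
    refine b.re_inner_apply_le_mul_norm_sq hb fun k hk => ?_
    have hkj : k ≠ j := by rintro rfl; exact hk.false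
    have hki : k ≠ i := by rintro rfl; exact (hμ.trans_lt hk).false
    simp [hcoef, hki, hkj]
  have hlower := hc w (by simpa [g, w] using hxy)
  have hw2 : 0 < ‖w‖ ^ 2 := by positivity
  nlinarith

end OrthonormalBasis

section Compression

variable {𝕜 E : Type*} [RCLike 𝕜] [NormedAddCommGroup E] [InnerProductSpace 𝕜 E]

theorem mul_norm_sq_le_re_inner_apply_of_norm_eq_one {T : E →ₗ[𝕜] E} {ψ : E} {c : ℝ}
    (h : ∀ v : E, ‖v‖ = 1 → ⟪ψ, v⟫_𝕜 = 0 → c ≤ re ⟪v, T v⟫_𝕜) {v : E} (hv : ⟪ψ, v⟫_𝕜 = 0) :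
    c * ‖v‖ ^ 2 ≤ re ⟪v, T v⟫_𝕜 := by
  rcases eq_or_ne v 0 with rfl | hv0
  · simp
  have hn : 0 < ‖v‖ := norm_pos_iff.mpr hv0
  have hu := h (((‖v‖⁻¹ : ℝ) : 𝕜) • v) (by simp [norm_smul, hn.ne'])
    (by simp [inner_smul_right, hv])
  rw [map_smul, inner_smul_left, inner_smul_right, ← mul_assoc, conj_ofReal, ← ofReal_mul,
    re_ofReal_mul, ← sq, inv_pow, le_inv_mul_iff₀ (by positivity)] at hu
  linarith

variable (V : Submodule 𝕜 E) [V.HasOrthogonalProjection]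

theorem Submodule.inner_apply_eq_of_coe_apply_eq_orthogonalProjectionOnto {T : E →ₗ[𝕜] E}
    {T' : V →ₗ[𝕜] V} (hT' : ∀ v, (T' v : E) = V.orthogonalProjectionOnto (T v)) (u v : V) :
    ⟪u, T' v⟫_𝕜 = ⟪(u : E), T v⟫_𝕜 := by
  rw [Submodule.coe_inner, hT', ← Submodule.coe_inner,
    Submodule.inner_orthogonalProjectionOnto_eq_of_mem_left]

theorem Submodule.re_inner_orthogonalProjectionOnto_eigenvector_le {T : E →ₗ[𝕜] E} {ψ : E}
    {ε : ℝ} (hψ : T ψ = (ε : 𝕜) • ψ) :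
    re ⟪(V.orthogonalProjectionOnto ψ : E), T (V.orthogonalProjectionOnto ψ)⟫_𝕜 ≤
      ε * ‖V.orthogonalProjectionOnto ψ‖ ^ 2 + ‖V.orthogonalProjectionOnto ψ‖ *
        ‖V.orthogonalProjectionOnto (T (ψ - V.orthogonalProjectionOnto ψ))‖ := by
  set φ := V.orthogonalProjectionOnto ψ
  set ρ := T (ψ - φ)
  have hsplit : T φ = (ε : 𝕜) • ψ - ρ := by rw [← hψ, ← map_sub, sub_sub_cancel]
  have hφψ : ⟪(φ : E), ψ⟫_𝕜 = ((‖φ‖ ^ 2 : ℝ) : 𝕜) := by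
    rw [← Submodule.inner_orthogonalProjectionOnto_eq_of_mem_left, @inner_self_eq_norm_sq_to_K 𝕜]
    norm_cast
  have hφρ : ⟪(φ : E), ρ⟫_𝕜 = ⟪φ, V.orthogonalProjectionOnto ρ⟫_𝕜 :=
    (Submodule.inner_orthogonalProjectionOnto_eq_of_mem_left _ _).symm
  have hρ : -re ⟪φ, V.orthogonalProjectionOnto ρ⟫_𝕜 ≤ ‖φ‖ * ‖V.orthogonalProjectionOnto ρ‖ := by
    simpa using re_inner_le_norm (𝕜 := 𝕜) φ (-V.orthogonalProjectionOnto ρ)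
  rw [hsplit, inner_sub_right, inner_smul_right, hφψ, hφρ, map_sub, ← ofReal_mul, ofReal_re]
  linarith

end Compression

/-- Robustness of the spectral gap to truncation: under the hypotheses of the ground-energy
robustness lemma, if additionally all eigenvalues of `H` other than `ε₀` are at least
`ε₁ = ε₀ + Δ` and `2δ₂/(1−δ₁²) ≤ Δ/2`, then the two smallest eigenvalues `ε₀' = μ' 0` and
`ε₁' = μ' 1` of the compression `H'` (listed in nondecreasing order with multiplicity via an
orthonormal eigenbasis) satisfy `ε₀' ≤ ε₁' − Δ/2`; in particular `ε₀'` is a simple eigenvalue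
and `H'` has spectral gap at least `Δ/2`. -/
theorem truncated_gap_bound
    {E : Type*} [NormedAddCommGroup E] [InnerProductSpace ℂ E] [FiniteDimensional ℂ E]
    (H : E →ₗ[ℂ] E)
    (ψ₀ : E) (ε₀ Δ : ℝ) (hψ₀ : ‖ψ₀‖ = 1) (heig : H ψ₀ = (ε₀ : ℂ) • ψ₀)
    (hother : ∀ v : E, ‖v‖ = 1 → (inner ℂ ψ₀ v : ℂ) = 0 → ε₀ + Δ ≤ (inner ℂ v (H v) : ℂ).re)
    (V : Submodule ℂ E)
    (H' : V →ₗ[ℂ] V) (hH' : ∀ v : V, (H' v : E) = (V.orthogonalProjection (H v) : E))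
    {m : ℕ} (hm : 2 ≤ m)
    (b' : OrthonormalBasis (Fin m) ℂ V) (μ' : Fin m → ℝ) (hμ' : Monotone μ')
    (hb' : ∀ i, H' (b' i) = (μ' i : ℂ) • b' i)
    (δ₁ δ₂ : ℝ)
    (hδ₁ : δ₁ = ‖ψ₀ - (V.orthogonalProjection ψ₀ : E)‖)
    (hδ₂ : δ₂ = ‖(V.orthogonalProjection (H (ψ₀ - (V.orthogonalProjection ψ₀ : E))) : E)‖)
    (hδ₁lt : δ₁ < 1)
    (hsmall : 2 * δ₂ / (1 - δ₁ ^ 2) ≤ Δ / 2) :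
    μ' ⟨0, by omega⟩ ≤ μ' ⟨1, by omega⟩ - Δ / 2 := by
  set φ := V.orthogonalProjectionOnto ψ₀
  have hd : 0 < 1 - δ₁ ^ 2 := by nlinarith [norm_nonneg (ψ₀ - φ)]
  have hφ : ‖φ‖ ^ 2 = 1 - δ₁ ^ 2 := by
    have := V.norm_sq_eq_add_norm_sq_starProjection ψ₀
    rw [Submodule.starProjection_orthogonal_val, Submodule.starProjection_apply, hψ₀] at this
    rw [hδ₁]
    simp only [Submodule.norm_coe] at this
    linarith
  have hground : μ' ⟨0, by omega⟩ * (1 - δ₁ ^ 2) ≤ ε₀ * (1 - δ₁ ^ 2) + δ₂ :=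
    calc μ' ⟨0, by omega⟩ * (1 - δ₁ ^ 2) ≤ (inner ℂ φ (H' φ)).re := by
          rw [← hφ]
          exact b'.mul_norm_sq_le_re_inner_apply hb' (fun i => hμ' (Fin.le_def.mpr i.val.zero_le)) φ
      _ = (inner ℂ (φ : E) (H φ)).re := by
          rw [V.inner_apply_eq_of_coe_apply_eq_orthogonalProjectionOnto hH']
      _ ≤ ε₀ * ‖φ‖ ^ 2 + ‖φ‖ * δ₂ := by
          rw [hδ₂]
          exact V.re_inner_orthogonalProjectionOnto_eigenvector_le heig
      _ ≤ ε₀ * (1 - δ₁ ^ 2) + δ₂ := by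
          have : ‖φ‖ ≤ 1 := by nlinarith [norm_nonneg φ]
          rw [hφ]
          nlinarith [norm_nonneg φ, hδ₂ ▸ norm_nonneg _]
  have hsecond : ε₀ + Δ ≤ μ' ⟨1, by omega⟩ := by
    refine b'.le_of_mul_norm_sq_le_re_inner_on_ker hb' ((innerₛₗ ℂ ψ₀) ∘ₗ V.subtype)
      (fun v hv => ?_) (i := ⟨0, by omega⟩) (by simp [Fin.ext_iff]) (hμ' (Fin.mk_le_mk.mpr zero_le_one))
    rw [V.inner_apply_eq_of_coe_apply_eq_orthogonalProjectionOnto hH']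
    exact mul_norm_sq_le_re_inner_apply_of_norm_eq_one hother hv
  rw [div_le_iff₀ hd] at hsmall
  nlinarith [hδ₂ ▸ norm_nonneg _]
end

section
/- Let H be Hermitian on a finite-dimensional Hilbert space with nondegenerate smallest eigenvalue ε₀ (unit eigenvector ψ₀) and spectral gap Δ = ε₁ − ε₀ > 0 to the rest of the spectrum. Let ψ₀' be a unit eigenvector of the compression H' of H to the range of a projection P, corresponding to the smallest eigenvalue ε₀' of H'. With δ₁ = ‖(I−P)ψ₀‖ < 1 and δ₂ = ‖P H(I−P)ψ₀‖, the fidelity satisfies |⟨ψ₀'|ψ₀⟩|² ≥ 1 − (2δ₂)/(Δ(1−δ₁²)); consequently the trace distance obeys D(ψ₀', ψ₀) ≤ sqrt(2δ₂/(Δ(1−δ₁²))). -/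
/-!
Write `ψ₀' = c ψ₀ + w` with `w ⊥ ψ₀`. As `ψ₀` is an eigenvector of the symmetric `H`, the energy
splits: `ε₀' = ⟨ψ₀', H ψ₀'⟩ ≥ |c|² ε₀ + (1 - |c|²)(ε₀ + Δ)`, i.e. `Δ (1 - |c|²) ≤ ε₀' - ε₀`.
Conversely `Pψ₀` is a trial state for `H'`, and `H Pψ₀ = ε₀ ψ₀ - H (I - P) ψ₀` shows that its
energy is at most `ε₀ ‖Pψ₀‖² + ‖Pψ₀‖ δ₂`; with `‖Pψ₀‖² = 1 - δ₁²` this gives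
`(ε₀' - ε₀)(1 - δ₁²) ≤ δ₂`. Together, `1 - |c|² ≤ δ₂ / (Δ (1 - δ₁²))`.
-/
open scoped InnerProductSpace

section

open RCLike

variable {𝕜 E : Type*} [RCLike 𝕜] [NormedAddCommGroup E] [InnerProductSpace 𝕜 E]

theorem re_inner_ofReal_smul_map_ofReal_smul (T : E →ₗ[𝕜] E) (r : ℝ) (v : E) :
    re ⟪(r : 𝕜) • v, T ((r : 𝕜) • v)⟫_𝕜 = r ^ 2 * re ⟪v, T v⟫_𝕜 := by
  rw [map_smul, inner_smul_left, inner_smul_right, conj_ofReal, ← mul_assoc, ← ofReal_mul,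
    re_ofReal_mul, sq]

theorem mul_norm_sq_le_re_inner_map_self_of_mem {T : E →ₗ[𝕜] E} {S : Submodule 𝕜 E} {c : ℝ}
    (h : ∀ v ∈ S, ‖v‖ = 1 → c ≤ re ⟪v, T v⟫_𝕜) {v : E} (hv : v ∈ S) :
    c * ‖v‖ ^ 2 ≤ re ⟪v, T v⟫_𝕜 := by
  rcases eq_or_ne v 0 with rfl | hv0
  · simp
  have hunit := h _ (S.smul_mem _ hv) (norm_smul_inv_norm hv0)
  rwa [← ofReal_inv, re_inner_ofReal_smul_map_ofReal_smul, inv_pow, ← div_eq_inv_mul,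
    le_div_iff₀ (by positivity)] at hunit

theorem LinearMap.IsSymmetric.mul_norm_sq_le_re_inner_map_self [FiniteDimensional 𝕜 E]
    {T : E →ₗ[𝕜] E} (hT : T.IsSymmetric) {ε : ℝ}
    (hε : ε ∈ lowerBounds {r : ℝ | ∃ v : E, ‖v‖ = 1 ∧ T v = (r : 𝕜) • v}) (v : E) :
    ε * ‖v‖ ^ 2 ≤ re ⟪v, T v⟫_𝕜 := by
  let b := hT.eigenvectorBasis rfl
  have hb i : T (b i) = (hT.eigenvalues rfl i : 𝕜) • b i := hT.apply_eigenvectorBasis rfl i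
  have hexpand : ⟪v, T v⟫_𝕜 = ∑ i, ((hT.eigenvalues rfl i * ‖⟪b i, v⟫_𝕜‖ ^ 2 : ℝ) : 𝕜) := by
    rw [← b.sum_inner_mul_inner v (T v)]
    refine Finset.sum_congr rfl fun i _ => ?_
    rw [← hT, hb, inner_smul_left, conj_ofReal, ← inner_conj_symm v, ofReal_mul, ofReal_pow,
      ← RCLike.conj_mul]
    ring
  rw [hexpand, map_sum, ← b.sum_sq_norm_inner_right v, Finset.mul_sum]
  refine Finset.sum_le_sum fun i _ => ?_
  rw [ofReal_re]
  exact mul_le_mul_of_nonneg_right (hε ⟨b i, b.orthonormal.1 i, hb i⟩) (sq_nonneg _)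

theorem re_inner_starProjection_map_le (K : Submodule 𝕜 E) [K.HasOrthogonalProjection]
    {H : E →ₗ[𝕜] E} {ψ₀ : E} {ε₀ : ℝ} (heig : H ψ₀ = (ε₀ : 𝕜) • ψ₀) :
    re ⟪K.starProjection ψ₀, H (K.starProjection ψ₀)⟫_𝕜 ≤
      ε₀ * ‖K.starProjection ψ₀‖ ^ 2 +
        ‖K.starProjection ψ₀‖ * ‖K.starProjection (H (ψ₀ - K.starProjection ψ₀))‖ := by
  set u := K.starProjection ψ₀
  set w := ψ₀ - u
  have hu : u ∈ K := K.starProjection_apply_mem ψ₀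
  have hHu : H u = (ε₀ : 𝕜) • ψ₀ - H w := by rw [← heig, ← map_sub, sub_sub_cancel]
  have huψ : ⟪u, ψ₀⟫_𝕜 = ⟪u, u⟫_𝕜 := by
    rw [← sub_eq_zero, ← inner_sub_right, inner_eq_zero_symm]
    exact K.starProjection_inner_eq_zero ψ₀ u hu
  have huHw : ⟪u, H w⟫_𝕜 = ⟪u, K.starProjection (H w)⟫_𝕜 := by
    rw [← K.inner_starProjection_left_eq_right, K.starProjection_eq_self_iff.mpr hu]
  have hcross : -re ⟪u, K.starProjection (H w)⟫_𝕜 ≤ ‖u‖ * ‖K.starProjection (H w)‖ :=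
    (neg_le_abs _).trans ((abs_re_le_norm _).trans (norm_inner_le_norm _ _))
  rw [hHu, inner_sub_right, inner_smul_right, huψ, huHw, inner_self_eq_norm_sq_to_K, map_sub,
    ← ofReal_pow, ← ofReal_mul, ofReal_re]
  linarith

theorem LinearMap.IsSymmetric.gap_mul_one_sub_norm_inner_sq_le {H : E →ₗ[𝕜] E}
    (hH : H.IsSymmetric) {ψ₀ : E} {ε₀ Δ : ℝ} (hψ₀ : ‖ψ₀‖ = 1) (heig : H ψ₀ = (ε₀ : 𝕜) • ψ₀)
    (hgap : ∀ v : E, ‖v‖ = 1 → ⟪ψ₀, v⟫_𝕜 = 0 → ε₀ + Δ ≤ re ⟪v, H v⟫_𝕜)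
    {φ : E} (hφ : ‖φ‖ = 1) :
    Δ * (1 - ‖⟪φ, ψ₀⟫_𝕜‖ ^ 2) ≤ re ⟪φ, H φ⟫_𝕜 - ε₀ := by
  rw [norm_inner_symm]
  set c := ⟪ψ₀, φ⟫_𝕜
  set w := φ - c • ψ₀
  have hψψ : ⟪ψ₀, ψ₀⟫_𝕜 = 1 := by rw [inner_self_eq_norm_sq_to_K, hψ₀]; simp
  have hw : ⟪ψ₀, w⟫_𝕜 = 0 := by simp [w, c, inner_sub_right, inner_smul_right, hψ₀]
  have hwψ : ⟪w, ψ₀⟫_𝕜 = 0 := inner_eq_zero_symm.mp hw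
  have hHw : ⟪ψ₀, H w⟫_𝕜 = 0 := by rw [← hH, heig, inner_smul_left, hw, mul_zero]
  have hφ_eq : φ = c • ψ₀ + w := by simp [w]
  have hnorm : ‖c‖ ^ 2 + ‖w‖ ^ 2 = 1 := by
    have := norm_add_sq_eq_norm_sq_add_norm_sq_of_inner_eq_zero (c • ψ₀) w
      (by rw [inner_smul_left, hw, mul_zero])
    rw [← hφ_eq, hφ, norm_smul, hψ₀, mul_one] at this
    nlinarith
  have henergy : re ⟪φ, H φ⟫_𝕜 = ε₀ * ‖c‖ ^ 2 + re ⟪w, H w⟫_𝕜 := by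
    rw [hφ_eq]
    simp only [map_add, map_smul, heig, inner_add_left, inner_add_right, inner_smul_left,
      inner_smul_right, hψψ, hwψ, hHw, mul_zero, add_zero, mul_one]
    rw [mul_left_comm, RCLike.mul_conj, ← ofReal_pow, ← ofReal_mul, ofReal_re, map_zero,
      zero_add]
  have hexcited : (ε₀ + Δ) * ‖w‖ ^ 2 ≤ re ⟪w, H w⟫_𝕜 :=
    mul_norm_sq_le_re_inner_map_self_of_mem (S := (𝕜 ∙ ψ₀)ᗮ)
      (fun v hv hv1 => hgap v hv1 (Submodule.mem_orthogonal_singleton_iff_inner_right.mp hv))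
      (Submodule.mem_orthogonal_singleton_iff_inner_right.mpr hw)
  have hw_sq : ‖w‖ ^ 2 = 1 - ‖c‖ ^ 2 := by linarith
  rw [hw_sq] at hexcited
  linarith

section compression

variable {K : Submodule 𝕜 E} [K.HasOrthogonalProjection] {H : E →ₗ[𝕜] E} {H' : K →ₗ[𝕜] K}

theorem inner_map_eq_of_compression
    (hH' : ∀ v : K, (H' v : E) = K.orthogonalProjectionOnto (H v)) (u v : K) :
    ⟪u, H' v⟫_𝕜 = ⟪(u : E), H v⟫_𝕜 := by
  rw [Submodule.coe_inner, hH', ← Submodule.coe_inner,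
    K.inner_orthogonalProjectionOnto_eq_of_mem_left]

theorem LinearMap.IsSymmetric.compression (hH : H.IsSymmetric)
    (hH' : ∀ v : K, (H' v : E) = K.orthogonalProjectionOnto (H v)) : H'.IsSymmetric := by
  intro u v
  rw [inner_map_eq_of_compression hH', ← inner_conj_symm, inner_map_eq_of_compression hH', ← hH,
    inner_conj_symm]

theorem sub_mul_one_sub_norm_sq_le_of_compression [FiniteDimensional 𝕜 K] (hH : H.IsSymmetric)
    (hH' : ∀ v : K, (H' v : E) = K.orthogonalProjectionOnto (H v)) {ψ₀ : E} {ε₀ ε₀' : ℝ}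
    (hψ₀ : ‖ψ₀‖ = 1) (heig : H ψ₀ = (ε₀ : 𝕜) • ψ₀)
    (hε₀' : ε₀' ∈ lowerBounds {r : ℝ | ∃ v : K, ‖v‖ = 1 ∧ H' v = (r : 𝕜) • v}) :
    (ε₀' - ε₀) * (1 - ‖ψ₀ - K.starProjection ψ₀‖ ^ 2) ≤
      ‖K.starProjection (H (ψ₀ - K.starProjection ψ₀))‖ := by
  have hray := (hH.compression hH').mul_norm_sq_le_re_inner_map_self hε₀'
    (K.orthogonalProjectionOnto ψ₀)
  rw [inner_map_eq_of_compression hH', Submodule.coe_norm, ← K.starProjection_apply] at hray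
  have hupper := re_inner_starProjection_map_le K heig
  have hpyth := K.norm_sq_eq_add_norm_sq_starProjection ψ₀
  rw [hψ₀, K.starProjection_orthogonal_val] at hpyth
  have hle : ‖K.starProjection ψ₀‖ ≤ 1 := hψ₀ ▸ K.norm_starProjection_apply_le ψ₀
  have hcross_le := mul_le_of_le_one_left
    (norm_nonneg (K.starProjection (H (ψ₀ - K.starProjection ψ₀)))) hle
  rw [show 1 - ‖ψ₀ - K.starProjection ψ₀‖ ^ 2 = ‖K.starProjection ψ₀‖ ^ 2 by linarith]
  linarith

end compression

end

theorem truncated_ground_state_fidelity_general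
    {E : Type*} [NormedAddCommGroup E] [InnerProductSpace ℂ E] [FiniteDimensional ℂ E]
    (H : E →ₗ[ℂ] E) (hH : H.IsSymmetric)
    (ψ₀ : E) (ε₀ Δ : ℝ) (hψ₀ : ‖ψ₀‖ = 1) (heig : H ψ₀ = (ε₀ : ℂ) • ψ₀)
    (hΔ : 0 < Δ)
    (hother : ∀ v : E, ‖v‖ = 1 → (inner ℂ ψ₀ v : ℂ) = 0 → ε₀ + Δ ≤ (inner ℂ v (H v) : ℂ).re)
    (V : Submodule ℂ E)
    (H' : V →ₗ[ℂ] V) (hH' : ∀ v : V, (H' v : E) = (Submodule.orthogonalProjection V (H v) : E))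
    (ψ₀' : V) (ε₀' : ℝ) (hψ₀' : ‖ψ₀'‖ = 1) (heig' : H' ψ₀' = (ε₀' : ℂ) • ψ₀')
    (hleast : IsLeast {r : ℝ | ∃ v : V, ‖v‖ = 1 ∧ H' v = (r : ℂ) • v} ε₀')
    (δ₁ δ₂ : ℝ)
    (hδ₁ : δ₁ = ‖ψ₀ - (Submodule.orthogonalProjection V ψ₀ : E)‖)
    (hδ₂ : δ₂ = ‖(Submodule.orthogonalProjection V (H (ψ₀ - (Submodule.orthogonalProjection V ψ₀ : E))) : E)‖)
    (hδ₁lt : δ₁ < 1) :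
    1 - 2 * δ₂ / (Δ * (1 - δ₁ ^ 2)) ≤ ‖(inner ℂ ((ψ₀' : E)) ψ₀ : ℂ)‖ ^ 2 ∧
    Real.sqrt (1 - ‖(inner ℂ ((ψ₀' : E)) ψ₀ : ℂ)‖ ^ 2) ≤
      Real.sqrt (2 * δ₂ / (Δ * (1 - δ₁ ^ 2))) := by
  have hδ₁_sq : 0 < 1 - δ₁ ^ 2 := by nlinarith [hδ₁ ▸ norm_nonneg (ψ₀ - V.starProjection ψ₀)]
  have hδ₂_nonneg : 0 ≤ δ₂ := hδ₂ ▸ norm_nonneg _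
  have henergy : (ε₀' - ε₀) * (1 - δ₁ ^ 2) ≤ δ₂ :=
    hδ₁ ▸ hδ₂ ▸ sub_mul_one_sub_norm_sq_le_of_compression hH hH' hψ₀ heig hleast.2
  have hrayleigh : RCLike.re (inner ℂ (ψ₀' : E) (H ψ₀')) = ε₀' := by
    rw [← inner_map_eq_of_compression hH', heig', inner_smul_right, inner_self_eq_norm_sq_to_K,
      hψ₀']
    simp
  have hoverlap := hH.gap_mul_one_sub_norm_inner_sq_le hψ₀ heig hother
    (φ := (ψ₀' : E)) (by rwa [← Submodule.coe_norm])
  rw [hrayleigh] at hoverlap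
  have hfid : 1 - ‖inner ℂ (ψ₀' : E) ψ₀‖ ^ 2 ≤ 2 * δ₂ / (Δ * (1 - δ₁ ^ 2)) := by
    rw [le_div_iff₀ (by positivity)]
    nlinarith [mul_le_mul_of_nonneg_right hoverlap hδ₁_sq.le]
  exact ⟨by linarith, Real.sqrt_le_sqrt hfid⟩

/-- Robustness of the ground state to truncation: fidelity and trace-distance bounds
between the ground state `ψ₀` of `H` and the ground state `ψ₀'` of the compression `H'`
of `H` to the range of the orthogonal projection onto `V`. -/
theorem truncated_ground_state_fidelity
    {E : Type*} [NormedAddCommGroup E] [InnerProductSpace ℂ E] [FiniteDimensional ℂ E]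
    (H : E →ₗ[ℂ] E) (hH : H.IsSymmetric)
    (ψ₀ : E) (ε₀ Δ : ℝ) (hψ₀ : ‖ψ₀‖ = 1) (heig : H ψ₀ = (ε₀ : ℂ) • ψ₀)
    (hΔ : 0 < Δ)
    (hmin : ∀ v : E, ‖v‖ = 1 → ε₀ ≤ (inner ℂ v (H v) : ℂ).re)
    (hother : ∀ v : E, ‖v‖ = 1 → (inner ℂ ψ₀ v : ℂ) = 0 → ε₀ + Δ ≤ (inner ℂ v (H v) : ℂ).re)
    (V : Submodule ℂ E)
    (H' : V →ₗ[ℂ] V) (hH' : ∀ v : V, (H' v : E) = (Submodule.orthogonalProjection V (H v) : E))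
    (ψ₀' : V) (ε₀' : ℝ) (hψ₀' : ‖ψ₀'‖ = 1) (heig' : H' ψ₀' = (ε₀' : ℂ) • ψ₀')
    (hleast : IsLeast {r : ℝ | ∃ v : V, ‖v‖ = 1 ∧ H' v = (r : ℂ) • v} ε₀')
    (δ₁ δ₂ : ℝ)
    (hδ₁ : δ₁ = ‖ψ₀ - (Submodule.orthogonalProjection V ψ₀ : E)‖)
    (hδ₂ : δ₂ = ‖(Submodule.orthogonalProjection V (H (ψ₀ - (Submodule.orthogonalProjection V ψ₀ : E))) : E)‖)
    (hδ₁lt : δ₁ < 1) :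
    1 - 2 * δ₂ / (Δ * (1 - δ₁ ^ 2)) ≤ ‖(inner ℂ ((ψ₀' : E)) ψ₀ : ℂ)‖ ^ 2 ∧
    Real.sqrt (1 - ‖(inner ℂ ((ψ₀' : E)) ψ₀ : ℂ)‖ ^ 2) ≤
      Real.sqrt (2 * δ₂ / (Δ * (1 - δ₁ ^ 2))) :=
  truncated_ground_state_fidelity_general H hH ψ₀ ε₀ Δ hψ₀ heig hΔ hother V H' hH' ψ₀' ε₀' hψ₀'
    heig' hleast δ₁ δ₂ hδ₁ hδ₂ hδ₁lt
end

section
/- Let H = H_A ⊗ I + H_{AB} + I ⊗ H_B be a Hermitian operator on a finite-dimensional bipartite Hilbert space H_A ⊗ H_B, where H_A acts only on A, H_B only on B, and H_{AB} is Hermitian with −(K_A ⊗ I) ≤ H_{AB} ≤ K_A ⊗ I for some Hermitian K_A on A. Let Ψ be a unit vector minimizing ⟨Ψ|H|Ψ⟩ (a ground state of H). Then for every unit vector Ψ_A ∈ H_A, ⟨Ψ|(H_A − K_A) ⊗ I|Ψ⟩ ≤ ⟨Ψ_A|(H_A + K_A)|Ψ_A⟩. -/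
/-!
Compare the ground state `Ψ` with the trial state `Ψ_A ⊗ Ψ_B`, where `Ψ_B` is a ground state of
`H_B` with energy `E`. In the Loewner order the coupling bounds and `E ≤ H_B` give
`(H_A - K_A) ⊗ I + E ≤ H ≤ (H_A + K_A) ⊗ I + I ⊗ H_B`. Evaluating the left inequality at `Ψ` and
the right one at the trial state, whose energy is `⟨Ψ_A|H_A + K_A|Ψ_A⟩ + E`, the variational
principle links the two and `E` cancels.
-/

open Matrix Kronecker ComplexOrder MatrixOrder

namespace Matrix

section Kronecker

variable {R ι κ : Type*}

def vecKronecker [Mul R] (x : ι → R) (y : κ → R) : ι × κ → R := fun p => x p.1 * y p.2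

theorem star_vecKronecker [CommSemiring R] [StarRing R] (x : ι → R) (y : κ → R) :
    star (vecKronecker x y) = vecKronecker (star x) (star y) := by
  funext p
  exact star_mul' (x p.1) (y p.2)

theorem sub_kronecker [Ring R] (A A' : Matrix ι ι R) (B : Matrix κ κ R) :
    (A - A') ⊗ₖ B = A ⊗ₖ B - A' ⊗ₖ B := by
  ext
  simp [sub_mul]

theorem kronecker_sub [Ring R] (A : Matrix ι ι R) (B B' : Matrix κ κ R) :
    A ⊗ₖ (B - B') = A ⊗ₖ B - A ⊗ₖ B' := by
  ext
  simp [mul_sub]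

variable [CommSemiring R] [Fintype ι] [Fintype κ]

theorem kronecker_mulVec_vecKronecker (A : Matrix ι ι R) (B : Matrix κ κ R)
    (x : ι → R) (y : κ → R) :
    (A ⊗ₖ B) *ᵥ vecKronecker x y = vecKronecker (A *ᵥ x) (B *ᵥ y) := by
  funext p
  simp only [vecKronecker, mulVec, dotProduct, kroneckerMap_apply, Fintype.sum_prod_type,
    Finset.sum_mul_sum]
  exact Finset.sum_congr rfl fun k _ => Finset.sum_congr rfl fun l _ => by ring

theorem vecKronecker_dotProduct_vecKronecker (x u : ι → R) (y v : κ → R) :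
    vecKronecker x y ⬝ᵥ vecKronecker u v = (x ⬝ᵥ u) * (y ⬝ᵥ v) := by
  simp only [vecKronecker, dotProduct, Fintype.sum_prod_type, Finset.sum_mul_sum]
  exact Finset.sum_congr rfl fun k _ => Finset.sum_congr rfl fun l _ => by ring

variable [StarRing R]

theorem star_vecKronecker_dotProduct_kronecker_mulVec (A : Matrix ι ι R) (B : Matrix κ κ R)
    (x : ι → R) (y : κ → R) :
    star (vecKronecker x y) ⬝ᵥ ((A ⊗ₖ B) *ᵥ vecKronecker x y) =
      (star x ⬝ᵥ (A *ᵥ x)) * (star y ⬝ᵥ (B *ᵥ y)) := by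
  rw [kronecker_mulVec_vecKronecker, star_vecKronecker, vecKronecker_dotProduct_vecKronecker]

theorem star_vecKronecker_dotProduct_kroneckerSum_mulVec [DecidableEq ι] [DecidableEq κ]
    (A : Matrix ι ι R) (B : Matrix κ κ R) {x : ι → R} {y : κ → R}
    (hx : star x ⬝ᵥ x = 1) (hy : star y ⬝ᵥ y = 1) :
    star (vecKronecker x y) ⬝ᵥ ((A ⊗ₖ 1 + 1 ⊗ₖ B) *ᵥ vecKronecker x y) =
      star x ⬝ᵥ (A *ᵥ x) + star y ⬝ᵥ (B *ᵥ y) := by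
  rw [add_mulVec, dotProduct_add, star_vecKronecker_dotProduct_kronecker_mulVec,
    star_vecKronecker_dotProduct_kronecker_mulVec]
  simp [hx, hy]

end Kronecker

section Loewner

variable {𝕜 ι κ : Type*} [RCLike 𝕜]

theorem kronecker_one_add_add_one_kronecker_le [DecidableEq ι] [DecidableEq κ]
    {KA : Matrix ι ι 𝕜} {HAB : Matrix (ι × κ) (ι × κ) 𝕜} (hub : HAB ≤ KA ⊗ₖ 1)
    (HA : Matrix ι ι 𝕜) (HB : Matrix κ κ 𝕜) :
    HA ⊗ₖ 1 + HAB + 1 ⊗ₖ HB ≤ (HA + KA) ⊗ₖ 1 + 1 ⊗ₖ HB := by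
  rw [add_kronecker]
  gcongr

variable [Fintype ι]

theorem re_dotProduct_mulVec_le_of_le {A B : Matrix ι ι 𝕜} (hAB : A ≤ B) (x : ι → 𝕜) :
    RCLike.re (star x ⬝ᵥ (A *ᵥ x)) ≤ RCLike.re (star x ⬝ᵥ (B *ᵥ x)) := by
  have h := (le_iff.mp hAB).re_dotProduct_nonneg x
  rwa [sub_mulVec, dotProduct_sub, map_sub, sub_nonneg] at h

theorem one_kronecker_mono [DecidableEq ι] [Fintype κ] {B B' : Matrix κ κ 𝕜} (h : B ≤ B') :
    (1 : Matrix ι ι 𝕜) ⊗ₖ B ≤ 1 ⊗ₖ B' := by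
  rw [le_iff, ← kronecker_sub]
  exact PosSemidef.one.kronecker (le_iff.mp h)

variable [DecidableEq ι]

theorem star_dotProduct_algebraMap_mulVec {v : ι → 𝕜} (hv : star v ⬝ᵥ v = 1) (E : ℝ) :
    star v ⬝ᵥ (algebraMap ℝ (Matrix ι ι 𝕜) E *ᵥ v) = E := by
  rw [Algebra.algebraMap_eq_smul_one, smul_mulVec, one_mulVec, dotProduct_smul, hv]
  simp [RCLike.real_smul_eq_coe_mul]

theorem IsHermitian.exists_ground_state [Nonempty ι] {A : Matrix ι ι 𝕜} (hA : A.IsHermitian) :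
    ∃ (E : ℝ) (v : ι → 𝕜), star v ⬝ᵥ v = 1 ∧ star v ⬝ᵥ (A *ᵥ v) = E ∧
      algebraMap ℝ (Matrix ι ι 𝕜) E ≤ A := by
  obtain ⟨i, hi⟩ := Finite.exists_min hA.eigenvalues
  set v : ι → 𝕜 := ⇑(hA.eigenvectorBasis i)
  have hv : star v ⬝ᵥ v = 1 := by
    rw [dotProduct_comm, ← EuclideanSpace.inner_eq_star_dotProduct]
    exact inner_self_eq_one_of_norm_eq_one (hA.eigenvectorBasis.orthonormal.1 i)
  refine ⟨hA.eigenvalues i, v, hv, ?_, ?_⟩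
  · rw [hA.mulVec_eigenvectorBasis, dotProduct_smul, hv]
    simp [RCLike.real_smul_eq_coe_mul]
  · rw [algebraMap_le_iff_le_spectrum hA.isSelfAdjoint, hA.spectrum_real_eq_range_eigenvalues]
    rintro _ ⟨j, rfl⟩
    exact hi j

variable [Fintype κ] [DecidableEq κ] {KA : Matrix ι ι 𝕜} {HAB : Matrix (ι × κ) (ι × κ) 𝕜}

theorem sub_kronecker_one_add_algebraMap_le {E : ℝ} {HB : Matrix κ κ 𝕜}
    (hlb : -(KA ⊗ₖ 1) ≤ HAB) (hE : algebraMap ℝ _ E ≤ HB) (HA : Matrix ι ι 𝕜) :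
    (HA - KA) ⊗ₖ 1 + algebraMap ℝ _ E ≤ HA ⊗ₖ 1 + HAB + 1 ⊗ₖ HB := by
  have hsplit : (HA - KA) ⊗ₖ (1 : Matrix κ κ 𝕜) + algebraMap ℝ _ E =
      HA ⊗ₖ 1 + -(KA ⊗ₖ 1) + (1 : Matrix ι ι 𝕜) ⊗ₖ algebraMap ℝ _ E := by
    rw [sub_kronecker, sub_eq_add_neg, Algebra.algebraMap_eq_smul_one,
      Algebra.algebraMap_eq_smul_one, kronecker_smul, one_kronecker_one]
  rw [hsplit]
  gcongr
  exact one_kronecker_mono hE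

end Loewner

end Matrix

open Matrix Kronecker ComplexOrder in
theorem bipartite_variational_bound_general {m n : ℕ}
    (HA KA : Matrix (Fin m) (Fin m) ℂ) (HB : Matrix (Fin n) (Fin n) ℂ)
    (HAB : Matrix (Fin m × Fin n) (Fin m × Fin n) ℂ)
    (hHB : HB.IsHermitian)
    (hub : (KA ⊗ₖ (1 : Matrix (Fin n) (Fin n) ℂ) - HAB).PosSemidef)
    (hlb : (HAB + KA ⊗ₖ (1 : Matrix (Fin n) (Fin n) ℂ)).PosSemidef)
    (H : Matrix (Fin m × Fin n) (Fin m × Fin n) ℂ)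
    (hH : H = HA ⊗ₖ (1 : Matrix (Fin n) (Fin n) ℂ) + HAB
        + (1 : Matrix (Fin m) (Fin m) ℂ) ⊗ₖ HB)
    (Ψ : Fin m × Fin n → ℂ) (hΨ : star Ψ ⬝ᵥ Ψ = 1)
    (hground : ∀ Φ : Fin m × Fin n → ℂ, star Φ ⬝ᵥ Φ = 1 →
      (star Ψ ⬝ᵥ H.mulVec Ψ).re ≤ (star Φ ⬝ᵥ H.mulVec Φ).re) :
    ∀ ΨA : Fin m → ℂ, star ΨA ⬝ᵥ ΨA = 1 →
      (star Ψ ⬝ᵥ (((HA - KA) ⊗ₖ (1 : Matrix (Fin n) (Fin n) ℂ)).mulVec Ψ)).re ≤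
        (star ΨA ⬝ᵥ ((HA + KA).mulVec ΨA)).re := by
  intro ΨA hΨA
  have : Nonempty (Fin n) := by
    by_contra hn
    simp [not_nonempty_iff.mp hn, dotProduct] at hΨ
  obtain ⟨E, ΨB, hΨB, hEΨB, hEHB⟩ := hHB.exists_ground_state
  have hΦ : star (vecKronecker ΨA ΨB) ⬝ᵥ vecKronecker ΨA ΨB = 1 := by
    rw [star_vecKronecker, vecKronecker_dotProduct_vecKronecker, hΨA, hΨB, one_mul]
  have hlower := sub_kronecker_one_add_algebraMap_le (HAB := HAB)
    (le_iff.mpr (by rwa [sub_neg_eq_add])) hEHB HA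
  have hupper := kronecker_one_add_add_one_kronecker_le (le_iff.mpr hub) HA HB
  rw [← hH] at hlower hupper
  have hΨ_lower := re_dotProduct_mulVec_le_of_le hlower Ψ
  have hΦ_upper := re_dotProduct_mulVec_le_of_le hupper (vecKronecker ΨA ΨB)
  simp only [add_mulVec, dotProduct_add, star_dotProduct_algebraMap_mulVec hΨ] at hΨ_lower
  rw [star_vecKronecker_dotProduct_kroneckerSum_mulVec _ _ hΨA hΨB, hEΨB] at hΦ_upper
  simp only [map_add, RCLike.re_to_complex] at hΨ_lower hΦ_upper ⊢
  linarith [hground _ hΦ]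

open Matrix Kronecker ComplexOrder in
/-- Bipartite variational bound: for `H = H_A ⊗ I + H_{AB} + I ⊗ H_B` with
`−K_A ⊗ I ≤ H_{AB} ≤ K_A ⊗ I` in the Loewner order, and `Ψ` a unit-norm ground state of `H`,
one has `⟨Ψ|(H_A − K_A) ⊗ I|Ψ⟩ ≤ ⟨Ψ_A|(H_A + K_A)|Ψ_A⟩` for every unit vector `Ψ_A`. -/
theorem bipartite_variational_bound {m n : ℕ}
    (HA KA : Matrix (Fin m) (Fin m) ℂ) (HB : Matrix (Fin n) (Fin n) ℂ)
    (HAB : Matrix (Fin m × Fin n) (Fin m × Fin n) ℂ)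
    (hHA : HA.IsHermitian) (hKA : KA.IsHermitian) (hHB : HB.IsHermitian)
    (hHAB : HAB.IsHermitian)
    (hub : (KA ⊗ₖ (1 : Matrix (Fin n) (Fin n) ℂ) - HAB).PosSemidef)
    (hlb : (HAB + KA ⊗ₖ (1 : Matrix (Fin n) (Fin n) ℂ)).PosSemidef)
    (H : Matrix (Fin m × Fin n) (Fin m × Fin n) ℂ)
    (hH : H = HA ⊗ₖ (1 : Matrix (Fin n) (Fin n) ℂ) + HAB
        + (1 : Matrix (Fin m) (Fin m) ℂ) ⊗ₖ HB)
    (Ψ : Fin m × Fin n → ℂ) (hΨ : star Ψ ⬝ᵥ Ψ = 1)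
    (hground : ∀ Φ : Fin m × Fin n → ℂ, star Φ ⬝ᵥ Φ = 1 →
      (star Ψ ⬝ᵥ H.mulVec Ψ).re ≤ (star Φ ⬝ᵥ H.mulVec Φ).re) :
    ∀ ΨA : Fin m → ℂ, star ΨA ⬝ᵥ ΨA = 1 →
      (star Ψ ⬝ᵥ (((HA - KA) ⊗ₖ (1 : Matrix (Fin n) (Fin n) ℂ)).mulVec Ψ)).re ≤
        (star ΨA ⬝ᵥ ((HA + KA).mulVec ΨA)).re :=
  bipartite_variational_bound_general HA KA HB HAB hHB hub hlb H hH Ψ hΨ hground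
end

section
/- Under the hypotheses of the previous statement, let Ξ be a Hermitian operator on H_A and L : ℝ≥0 → ℝ a convex nondecreasing function with L(x) → ∞ as x → ∞, such that H_A − K_A ≥ L(|Ξ|) in the operator order (where L(|Ξ|) is defined by functional calculus on |Ξ| = √(Ξ²)). Then the ground state Ψ of H satisfies L(⟨Ψ| |Ξ| ⊗ I |Ψ⟩) ≤ ⟨Ψ_A|(H_A + K_A)|Ψ_A⟩ for every unit Ψ_A ∈ H_A; in particular ⟨Ψ| |Ξ|⊗I |Ψ⟩ ≤ L⁻¹(min over unit Ψ_A of ⟨Ψ_A|(H_A+K_A)|Ψ_A⟩). -/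
/-! In the eigenbasis of `U ⊗ 1` the state `Ψ` induces a probability distribution on the numbers
`|d i|`, so Jensen's inequality and the domination hypothesis give
`L ⟨|Ξ| ⊗ 1⟩_Ψ ≤ ⟨L(|Ξ|) ⊗ 1⟩_Ψ ≤ ⟨(H_A - K_A) ⊗ 1⟩_Ψ`.
The last expectation is controlled variationally: compare `Ψ` with the trial state `Ψ_A ⊗ v`,
`v` a ground state of `H_B`, and bound `H_AB` below by `-K_A ⊗ 1` at `Ψ` and above by `K_A ⊗ 1`
at the trial state. Since `⟨1 ⊗ H_B⟩_Ψ` is at least the least eigenvalue of `H_B`, which is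
`⟨H_B⟩_v`, the `H_B` terms cancel and `⟨(H_A - K_A) ⊗ 1⟩_Ψ ≤ ⟨H_A + K_A⟩_{Ψ_A}` remains. -/

open Matrix Kronecker ComplexOrder

section

variable {ι : Type*} [Fintype ι]

def expectation (M : Matrix ι ι ℂ) (x : ι → ℂ) : ℝ := (star x ⬝ᵥ M *ᵥ x).re

lemma expectation_add (M N : Matrix ι ι ℂ) (x : ι → ℂ) :
    expectation (M + N) x = expectation M x + expectation N x := by
  simp only [expectation, add_mulVec, dotProduct_add, Complex.add_re]

lemma expectation_sub (M N : Matrix ι ι ℂ) (x : ι → ℂ) :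
    expectation (M - N) x = expectation M x - expectation N x := by
  simp only [expectation, sub_mulVec, dotProduct_sub, Complex.sub_re]

lemma expectation_smul_one [DecidableEq ι] (c : ℝ) {x : ι → ℂ} (hx : star x ⬝ᵥ x = 1) :
    expectation ((c : ℂ) • (1 : Matrix ι ι ℂ)) x = c := by
  simp [expectation, smul_mulVec, hx]

lemma Matrix.PosSemidef.expectation_nonneg {M : Matrix ι ι ℂ} (hM : M.PosSemidef)
    (x : ι → ℂ) : 0 ≤ expectation M x :=
  (Complex.nonneg_iff.mp (hM.dotProduct_mulVec_nonneg x)).1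

lemma expectation_le_of_posSemidef_sub {M N : Matrix ι ι ℂ} (h : (N - M).PosSemidef)
    (x : ι → ℂ) : expectation M x ≤ expectation N x := by
  simpa [expectation_sub] using h.expectation_nonneg x

open scoped MatrixOrder in
lemma Matrix.IsHermitian.posSemidef_sub_smul_one [DecidableEq ι] {A : Matrix ι ι ℂ}
    (hA : A.IsHermitian) {c : ℝ} (hc : ∀ i, c ≤ hA.eigenvalues i) :
    (A - (c : ℂ) • 1).PosSemidef := by
  have : algebraMap ℝ (Matrix ι ι ℂ) c ≤ A := by
    rw [algebraMap_le_iff_le_spectrum hA.isSelfAdjoint, hA.spectrum_real_eq_range_eigenvalues]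
    rintro _ ⟨i, rfl⟩
    exact hc i
  simpa [le_iff, Algebra.algebraMap_eq_smul_one] using this

end

section

variable {ι : Type*} [Fintype ι] [DecidableEq ι]

lemma expectation_conj_diagonal (U : Matrix ι ι ℂ) (c : ι → ℝ) (x : ι → ℂ) :
    expectation (U * diagonal (fun i => (c i : ℂ)) * star U) x
      = ∑ i, Complex.normSq ((star U *ᵥ x) i) * c i := by
  have hx : star x ᵥ* U = star (star U *ᵥ x) := by
    rw [star_mulVec, star_eq_conjTranspose, conjTranspose_conjTranspose]
  rw [expectation, ← mulVec_mulVec, ← mulVec_mulVec, dotProduct_mulVec, hx]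
  simp only [dotProduct, mulVec_diagonal, Complex.re_sum]
  refine Finset.sum_congr rfl fun i _ => ?_
  rw [Pi.star_apply, Complex.star_def, mul_left_comm, ← Complex.normSq_eq_conj_mul_self,
    ← Complex.ofReal_mul, Complex.ofReal_re, mul_comm]

lemma sum_normSq_star_mulVec {U : Matrix ι ι ℂ} (hU : U ∈ unitaryGroup ι ℂ) {x : ι → ℂ}
    (hx : star x ⬝ᵥ x = 1) : ∑ i, Complex.normSq ((star U *ᵥ x) i) = 1 := by
  simpa [hU.2, hx, expectation] using (expectation_conj_diagonal U 1 x).symm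

theorem ConvexOn.map_expectation_conj_diagonal_le {s : Set ℝ} {f : ℝ → ℝ}
    (hf : ConvexOn ℝ s f) {U : Matrix ι ι ℂ} (hU : U ∈ unitaryGroup ι ℂ) {c : ι → ℝ}
    (hc : ∀ i, c i ∈ s) {x : ι → ℂ} (hx : star x ⬝ᵥ x = 1) :
    f (expectation (U * diagonal (fun i => (c i : ℂ)) * star U) x)
      ≤ expectation (U * diagonal (fun i => (f (c i) : ℂ)) * star U) x := by
  simp only [expectation_conj_diagonal]
  exact hf.map_sum_le (fun i _ => Complex.normSq_nonneg _) (sum_normSq_star_mulVec hU hx)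
    fun i _ => hc i

end

section

variable {ι κ : Type*} [Fintype ι] [Fintype κ]

lemma conj_diagonal_kronecker_one [DecidableEq ι] [DecidableEq κ] (U : Matrix ι ι ℂ)
    (c : ι → ℂ) :
    (U * diagonal c * star U) ⊗ₖ (1 : Matrix κ κ ℂ)
      = (U ⊗ₖ (1 : Matrix κ κ ℂ)) * diagonal (fun p => c p.1)
        * star (U ⊗ₖ (1 : Matrix κ κ ℂ)) := by
  have hdiag : diagonal (fun p : ι × κ => c p.1) = diagonal c ⊗ₖ (1 : Matrix κ κ ℂ) := by
    rw [← diagonal_one, diagonal_kronecker_diagonal]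
    simp only [mul_one]
  rw [hdiag, star_eq_conjTranspose, star_eq_conjTranspose, conjTranspose_kronecker,
    conjTranspose_one, ← mul_kronecker_mul, ← mul_kronecker_mul, mul_one, mul_one]

lemma star_dotProduct_kronecker_mulVec (M : Matrix ι ι ℂ) (N : Matrix κ κ ℂ) (x : ι → ℂ)
    (y : κ → ℂ) :
    star (fun p : ι × κ => x p.1 * y p.2) ⬝ᵥ (M ⊗ₖ N) *ᵥ (fun p => x p.1 * y p.2)
      = (star x ⬝ᵥ M *ᵥ x) * (star y ⬝ᵥ N *ᵥ y) := by
  simp only [dotProduct, mulVec, kroneckerMap_apply, Pi.star_apply, star_mul',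
    Fintype.sum_prod_type, Finset.sum_mul_sum]
  refine Finset.sum_congr rfl fun i _ => Finset.sum_congr rfl fun j _ => ?_
  rw [mul_mul_mul_comm, Finset.sum_mul_sum]
  congr 1
  refine Finset.sum_congr rfl fun k _ => Finset.sum_congr rfl fun l _ => ?_
  ring

lemma star_dotProduct_prod (x : ι → ℂ) (y : κ → ℂ) :
    star (fun p : ι × κ => x p.1 * y p.2) ⬝ᵥ (fun p => x p.1 * y p.2)
      = (star x ⬝ᵥ x) * (star y ⬝ᵥ y) := by
  classical
  simpa using star_dotProduct_kronecker_mulVec (1 : Matrix ι ι ℂ) (1 : Matrix κ κ ℂ) x y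

lemma expectation_kronecker_one_prod [DecidableEq κ] (M : Matrix ι ι ℂ) (x : ι → ℂ)
    {y : κ → ℂ} (hy : star y ⬝ᵥ y = 1) :
    expectation (M ⊗ₖ (1 : Matrix κ κ ℂ)) (fun p => x p.1 * y p.2) = expectation M x := by
  simp [expectation, star_dotProduct_kronecker_mulVec, hy]

lemma expectation_one_kronecker_prod [DecidableEq ι] (N : Matrix κ κ ℂ) {x : ι → ℂ}
    (hx : star x ⬝ᵥ x = 1) (y : κ → ℂ) :
    expectation ((1 : Matrix ι ι ℂ) ⊗ₖ N) (fun p => x p.1 * y p.2) = expectation N y := by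
  simp [expectation, star_dotProduct_kronecker_mulVec, hx]

lemma expectation_kronecker_one_le [DecidableEq κ] {M N : Matrix ι ι ℂ}
    (h : (N - M).PosSemidef) (x : ι × κ → ℂ) :
    expectation (M ⊗ₖ (1 : Matrix κ κ ℂ)) x ≤ expectation (N ⊗ₖ (1 : Matrix κ κ ℂ)) x := by
  have := (h.kronecker (PosSemidef.one (n := κ))).expectation_nonneg x
  rw [← sub_add_cancel N M, add_kronecker, expectation_add]
  linarith

end

section

variable {ι κ : Type*} [Fintype ι] [Fintype κ] [DecidableEq ι] [DecidableEq κ]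

lemma Matrix.IsHermitian.star_dotProduct_eigenvectorBasis {A : Matrix κ κ ℂ}
    (hA : A.IsHermitian) (j : κ) :
    star ⇑(hA.eigenvectorBasis j) ⬝ᵥ ⇑(hA.eigenvectorBasis j) = 1 := by
  rw [dotProduct_comm, ← EuclideanSpace.inner_eq_star_dotProduct, inner_self_eq_norm_sq_to_K,
    hA.eigenvectorBasis.orthonormal.1 j]
  simp

lemma Matrix.IsHermitian.expectation_eigenvectorBasis {A : Matrix κ κ ℂ}
    (hA : A.IsHermitian) (j : κ) :
    expectation A ⇑(hA.eigenvectorBasis j) = hA.eigenvalues j := by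
  simp [expectation, hA.mulVec_eigenvectorBasis, hA.star_dotProduct_eigenvectorBasis]

lemma le_expectation_one_kronecker {B : Matrix κ κ ℂ} (hB : B.IsHermitian) {c : ℝ}
    (hc : ∀ j, c ≤ hB.eigenvalues j) {x : ι × κ → ℂ} (hx : star x ⬝ᵥ x = 1) :
    c ≤ expectation ((1 : Matrix ι ι ℂ) ⊗ₖ B) x := by
  have hsplit : (1 : Matrix ι ι ℂ) ⊗ₖ B = 1 ⊗ₖ (B - (c : ℂ) • 1) + (c : ℂ) • 1 := by
    rw [← one_kronecker_one, ← kronecker_smul, ← kronecker_add, sub_add_cancel]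
  have := (PosSemidef.one.kronecker (hB.posSemidef_sub_smul_one hc)).expectation_nonneg x
  rw [hsplit, expectation_add, expectation_smul_one c hx]
  linarith

theorem expectation_sub_kronecker_one_le_of_ground_state {HA KA : Matrix ι ι ℂ}
    {HB : Matrix κ κ ℂ} (hHB : HB.IsHermitian) {HAB : Matrix (ι × κ) (ι × κ) ℂ}
    (hub : (KA ⊗ₖ (1 : Matrix κ κ ℂ) - HAB).PosSemidef)
    (hlb : (HAB + KA ⊗ₖ (1 : Matrix κ κ ℂ)).PosSemidef)
    {Ψ : ι × κ → ℂ} (hΨ : star Ψ ⬝ᵥ Ψ = 1)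
    (hground : ∀ Φ : ι × κ → ℂ, star Φ ⬝ᵥ Φ = 1 →
      expectation (HA ⊗ₖ 1 + HAB + 1 ⊗ₖ HB) Ψ ≤ expectation (HA ⊗ₖ 1 + HAB + 1 ⊗ₖ HB) Φ)
    {ΨA : ι → ℂ} (hΨA : star ΨA ⬝ᵥ ΨA = 1) :
    expectation ((HA - KA) ⊗ₖ (1 : Matrix κ κ ℂ)) Ψ ≤ expectation (HA + KA) ΨA := by
  have : Nonempty κ := by
    by_contra h
    have : IsEmpty κ := not_nonempty_iff.mp h
    simp [dotProduct] at hΨ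
  obtain ⟨j₀, hj₀⟩ := Finite.exists_min hHB.eigenvalues
  set v : κ → ℂ := ⇑(hHB.eigenvectorBasis j₀)
  have hv : star v ⬝ᵥ v = 1 := hHB.star_dotProduct_eigenvectorBasis j₀
  have hHBv : expectation HB v = hHB.eigenvalues j₀ := hHB.expectation_eigenvectorBasis j₀
  have hΦ : star (fun p : ι × κ => ΨA p.1 * v p.2) ⬝ᵥ (fun p => ΨA p.1 * v p.2) = 1 := by
    rw [star_dotProduct_prod, hΨA, hv, one_mul]
  have hground_trial := hground _ hΦ
  have hAB_upper := expectation_le_of_posSemidef_sub hub (fun p : ι × κ => ΨA p.1 * v p.2)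
  have hAB_lower := hlb.expectation_nonneg Ψ
  have hB := le_expectation_one_kronecker hHB hj₀ hΨ
  have hsub : (HA - KA) ⊗ₖ (1 : Matrix κ κ ℂ) = HA ⊗ₖ 1 - KA ⊗ₖ 1 := by
    rw [eq_sub_iff_add_eq, ← add_kronecker, sub_add_cancel]
  simp only [expectation_add, expectation_kronecker_one_prod _ _ hv,
    expectation_one_kronecker_prod _ hΨA, hHBv] at hground_trial hAB_upper hAB_lower ⊢
  rw [hsub, expectation_sub]
  linarith

end

open Matrix Kronecker ComplexOrder in
theorem bipartite_quantum_number_bound_general {m n : ℕ}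
    (HA KA : Matrix (Fin m) (Fin m) ℂ) (HB : Matrix (Fin n) (Fin n) ℂ)
    (HAB : Matrix (Fin m × Fin n) (Fin m × Fin n) ℂ)
    (hHB : HB.IsHermitian)
    (hub : (KA ⊗ₖ (1 : Matrix (Fin n) (Fin n) ℂ) - HAB).PosSemidef)
    (hlb : (HAB + KA ⊗ₖ (1 : Matrix (Fin n) (Fin n) ℂ)).PosSemidef)
    (H : Matrix (Fin m × Fin n) (Fin m × Fin n) ℂ)
    (hH : H = HA ⊗ₖ (1 : Matrix (Fin n) (Fin n) ℂ) + HAB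
        + (1 : Matrix (Fin m) (Fin m) ℂ) ⊗ₖ HB)
    (Ψ : Fin m × Fin n → ℂ) (hΨ : star Ψ ⬝ᵥ Ψ = 1)
    (hground : ∀ Φ : Fin m × Fin n → ℂ, star Φ ⬝ᵥ Φ = 1 →
      (star Ψ ⬝ᵥ H.mulVec Ψ).re ≤ (star Φ ⬝ᵥ H.mulVec Φ).re)
    -- the Hermitian operator Ξ and its functional calculus, via a unitary eigendecomposition
    (AbsΞ LAbsΞ : Matrix (Fin m) (Fin m) ℂ)
    (U : Matrix (Fin m) (Fin m) ℂ) (hU : U ∈ Matrix.unitaryGroup (Fin m) ℂ)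
    (d : Fin m → ℝ)
    (hAbsΞ : AbsΞ = U * Matrix.diagonal (fun i => ((|d i| : ℝ) : ℂ)) * star U)
    (L : ℝ → ℝ) (hLconv : ConvexOn ℝ (Set.Ici 0) L)
    (hLAbsΞ : LAbsΞ = U * Matrix.diagonal (fun i => (L |d i| : ℂ)) * star U)
    (hdom : (HA - KA - LAbsΞ).PosSemidef) :
    ∀ ΨA : Fin m → ℂ, star ΨA ⬝ᵥ ΨA = 1 →
      L ((star Ψ ⬝ᵥ ((AbsΞ ⊗ₖ (1 : Matrix (Fin n) (Fin n) ℂ)).mulVec Ψ)).re) ≤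
        (star ΨA ⬝ᵥ ((HA + KA).mulVec ΨA)).re := by
  intro ΨA hΨA
  subst hH
  have hU₁ : U ⊗ₖ (1 : Matrix (Fin n) (Fin n) ℂ) ∈ unitaryGroup (Fin m × Fin n) ℂ :=
    kronecker_mem_unitary hU (one_mem _)
  calc L (expectation (AbsΞ ⊗ₖ (1 : Matrix (Fin n) (Fin n) ℂ)) Ψ)
      ≤ expectation (LAbsΞ ⊗ₖ (1 : Matrix (Fin n) (Fin n) ℂ)) Ψ := by
        rw [hAbsΞ, hLAbsΞ, conj_diagonal_kronecker_one, conj_diagonal_kronecker_one]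
        exact hLconv.map_expectation_conj_diagonal_le hU₁ (fun p => abs_nonneg (d p.1)) hΨ
    _ ≤ expectation ((HA - KA) ⊗ₖ (1 : Matrix (Fin n) (Fin n) ℂ)) Ψ :=
        expectation_kronecker_one_le hdom Ψ
    _ ≤ expectation (HA + KA) ΨA :=
        expectation_sub_kronecker_one_le_of_ground_state hHB hub hlb hΨ hground hΨA

open Matrix Kronecker ComplexOrder in
/-- Bipartite variational bound with functional calculus: under the hypotheses of the
variational lemma, if `Ξ = U diag(d) U†` is Hermitian on `H_A` with `|Ξ| = U diag(|d|) U†`,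
`L` is convex, nondecreasing and unbounded on `[0,∞)`, and `H_A − K_A ≥ L(|Ξ|)` in the
Loewner order (with `L(|Ξ|) = U diag(L(|d|)) U†`), then the ground state `Ψ` of `H`
satisfies `L(⟨Ψ| |Ξ| ⊗ I |Ψ⟩) ≤ ⟨Ψ_A|(H_A + K_A)|Ψ_A⟩` for every unit `Ψ_A`. -/
theorem bipartite_quantum_number_bound {m n : ℕ}
    (HA KA : Matrix (Fin m) (Fin m) ℂ) (HB : Matrix (Fin n) (Fin n) ℂ)
    (HAB : Matrix (Fin m × Fin n) (Fin m × Fin n) ℂ)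
    (hHA : HA.IsHermitian) (hKA : KA.IsHermitian) (hHB : HB.IsHermitian)
    (hHAB : HAB.IsHermitian)
    (hub : (KA ⊗ₖ (1 : Matrix (Fin n) (Fin n) ℂ) - HAB).PosSemidef)
    (hlb : (HAB + KA ⊗ₖ (1 : Matrix (Fin n) (Fin n) ℂ)).PosSemidef)
    (H : Matrix (Fin m × Fin n) (Fin m × Fin n) ℂ)
    (hH : H = HA ⊗ₖ (1 : Matrix (Fin n) (Fin n) ℂ) + HAB
        + (1 : Matrix (Fin m) (Fin m) ℂ) ⊗ₖ HB)
    (Ψ : Fin m × Fin n → ℂ) (hΨ : star Ψ ⬝ᵥ Ψ = 1)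
    (hground : ∀ Φ : Fin m × Fin n → ℂ, star Φ ⬝ᵥ Φ = 1 →
      (star Ψ ⬝ᵥ H.mulVec Ψ).re ≤ (star Φ ⬝ᵥ H.mulVec Φ).re)
    -- the Hermitian operator Ξ and its functional calculus, via a unitary eigendecomposition
    (Ξ AbsΞ LAbsΞ : Matrix (Fin m) (Fin m) ℂ)
    (U : Matrix (Fin m) (Fin m) ℂ) (hU : U ∈ Matrix.unitaryGroup (Fin m) ℂ)
    (d : Fin m → ℝ)
    (hΞ : Ξ = U * Matrix.diagonal (fun i => (d i : ℂ)) * star U)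
    (hAbsΞ : AbsΞ = U * Matrix.diagonal (fun i => ((|d i| : ℝ) : ℂ)) * star U)
    (L : ℝ → ℝ) (hLconv : ConvexOn ℝ (Set.Ici 0) L) (hLmono : MonotoneOn L (Set.Ici 0))
    (hLunbdd : Filter.Tendsto L Filter.atTop Filter.atTop)
    (hLAbsΞ : LAbsΞ = U * Matrix.diagonal (fun i => (L |d i| : ℂ)) * star U)
    (hdom : (HA - KA - LAbsΞ).PosSemidef) :
    ∀ ΨA : Fin m → ℂ, star ΨA ⬝ᵥ ΨA = 1 →
      L ((star Ψ ⬝ᵥ ((AbsΞ ⊗ₖ (1 : Matrix (Fin n) (Fin n) ℂ)).mulVec Ψ)).re) ≤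
        (star ΨA ⬝ᵥ ((HA + KA).mulVec ΨA)).re :=
  bipartite_quantum_number_bound_general HA KA HB HAB hHB hub hlb H hH Ψ hΨ hground AbsΞ LAbsΞ U hU
    d hAbsΞ L hLconv hLAbsΞ hdom
end

section
/- Rescaled Chebyshev AGSP shrinking bound: for 0 < Δ ≤ M, define f_ℓ(x) = T_ℓ((M + Δ − 2x)/(M − Δ)) / T_ℓ((M + Δ)/(M − Δ)). Then f_ℓ(0) = 1 and for all λ ∈ [Δ, M], |f_ℓ(λ)| ≤ 1/T_ℓ((M+Δ)/(M−Δ)) ≤ 2·(1 + 2√(Δ/M))^{−ℓ} ≤ 2 exp(−2ℓ√(Δ/M) + 2ℓ·(2Δ/M)). -/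
/-!
On `[Δ, M]` the affine substitution `y = (M + Δ - 2x) / (M - Δ)` ranges over `[-1, 1]`, where
`|T_ℓ| ≤ 1`, while `x = 0` goes to `y₀ = (M + Δ) / (M - Δ) ≥ 1`. Writing `y₀ = cosh θ` gives
`T_ℓ(y₀) = cosh (ℓθ) ≥ e^{ℓθ} / 2 = (y₀ + √(y₀² - 1))^ℓ / 2`, and `√(y₀² - 1) ≥ 2√(Δ/M)`.
The exponential bound is `1 / (1 + t) ≤ exp (-t + t²)` with `t = 2√(Δ/M)`.
-/

open Real Polynomial.Chebyshev

theorem Polynomial.Chebyshev.add_sqrt_sq_sub_one_pow_div_two_le_eval_T (n : ℕ) {x : ℝ}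
    (hx : 1 ≤ x) : (x + √(x ^ 2 - 1)) ^ n / 2 ≤ (T ℝ n).eval x := by
  have hcosh : (T ℝ n).eval x = cosh (n * arcosh x) := by
    conv_lhs => rw [← cosh_arcosh hx]
    exact_mod_cast T_real_cosh (arcosh x) n
  rw [hcosh, cosh_eq, ← exp_arcosh hx, ← exp_nat_mul]
  gcongr
  linarith [exp_pos (-(n * arcosh x))]

theorem inv_one_add_le_exp_neg_add_sq {t : ℝ} (ht : 0 ≤ t) : (1 + t)⁻¹ ≤ exp (-t + t ^ 2) := by
  rw [inv_le_iff_one_le_mul₀' (by linarith)]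
  -- `(1 + t) * (1 - t + t²) = 1 + t³`
  calc (1 : ℝ) ≤ (1 + t) * (1 + (-t + t ^ 2)) := by nlinarith [pow_nonneg ht 3]
    _ ≤ (1 + t) * exp (-t + t ^ 2) := by
      gcongr
      linarith [add_one_le_exp (-t + t ^ 2)]

theorem two_mul_sqrt_div_le_sqrt_sq_sub_one {Δ M : ℝ} (hΔ : 0 ≤ Δ) (hM : Δ < M) :
    2 * √(Δ / M) ≤ √(((M + Δ) / (M - Δ)) ^ 2 - 1) := by
  have hMΔ : 0 < M - Δ := by linarith
  have hM0 : 0 < M := by linarith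
  have hsq : ((M + Δ) / (M - Δ)) ^ 2 - 1 = 4 * (M * Δ) / (M - Δ) ^ 2 := by
    field_simp
    ring
  have hle : 4 * (Δ / M) ≤ 4 * (M * Δ) / (M - Δ) ^ 2 := by
    rw [mul_div_assoc', div_le_div_iff₀ hM0 (by positivity)]
    nlinarith [mul_nonneg (mul_nonneg hΔ hΔ) (show 0 ≤ 2 * M - Δ by linarith)]
  calc 2 * √(Δ / M) = √(4 * (Δ / M)) := by
        rw [sqrt_mul (by norm_num), show (4 : ℝ) = 2 ^ 2 by norm_num, sqrt_sq (by norm_num)]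
    _ ≤ _ := by rw [hsq]; exact sqrt_le_sqrt hle

theorem abs_div_le_one_of_mem_Icc {Δ M x : ℝ} (hM : Δ < M) (hx : x ∈ Set.Icc Δ M) :
    |(M + Δ - 2 * x) / (M - Δ)| ≤ 1 := by
  have hMΔ : 0 < M - Δ := by linarith
  rw [abs_div, abs_of_pos hMΔ, div_le_one hMΔ, abs_le]
  constructor <;> linarith [hx.1, hx.2]

/-- Rescaled Chebyshev AGSP shrinking bound: for `0 < Δ < M`, the rescaled Chebyshev
polynomial `f_ℓ(x) = T_ℓ((M+Δ−2x)/(M−Δ)) / T_ℓ((M+Δ)/(M−Δ))` satisfies `f_ℓ(0) = 1` and,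
for all `λ ∈ [Δ, M]`,
`|f_ℓ(λ)| ≤ 1/T_ℓ((M+Δ)/(M−Δ)) ≤ 2·(1 + 2√(Δ/M))^{−ℓ} ≤ 2·exp(−2ℓ√(Δ/M) + 2ℓ·(2Δ/M))`. -/
theorem chebyshev_agsp_shrinking (ℓ : ℕ) (Δ M : ℝ) (hΔ : 0 < Δ) (hM : Δ < M)
    (f : ℝ → ℝ)
    (hf : f = fun x => (Polynomial.Chebyshev.T ℝ ℓ).eval ((M + Δ - 2 * x) / (M - Δ)) /
      (Polynomial.Chebyshev.T ℝ ℓ).eval ((M + Δ) / (M - Δ))) :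
    f 0 = 1 ∧
    ∀ lam ∈ Set.Icc Δ M,
      |f lam| ≤ 1 / (Polynomial.Chebyshev.T ℝ ℓ).eval ((M + Δ) / (M - Δ)) ∧
      1 / (Polynomial.Chebyshev.T ℝ ℓ).eval ((M + Δ) / (M - Δ)) ≤
        2 / (1 + 2 * Real.sqrt (Δ / M)) ^ ℓ ∧
      2 / (1 + 2 * Real.sqrt (Δ / M)) ^ ℓ ≤
        2 * Real.exp (-(2 * ℓ) * Real.sqrt (Δ / M) + 2 * ℓ * (2 * Δ / M)) := by
  set y₀ := (M + Δ) / (M - Δ)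
  set s := √(Δ / M)
  have hy₀ : 1 ≤ y₀ := (one_le_div (by linarith)).mpr (by linarith)
  have hT : (1 + 2 * s) ^ ℓ / 2 ≤ (T ℝ ℓ).eval y₀ := by
    refine le_trans ?_ (add_sqrt_sq_sub_one_pow_div_two_le_eval_T ℓ hy₀)
    gcongr
    exact two_mul_sqrt_div_le_sqrt_sq_sub_one hΔ.le hM
  have hTpos : 0 < (T ℝ ℓ).eval y₀ := lt_of_lt_of_le (by positivity) hT
  subst hf
  refine ⟨by simp [y₀, div_self hTpos.ne'], fun lam hlam => ⟨?_, ?_, ?_⟩⟩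
  · rw [abs_div, abs_of_pos hTpos]
    gcongr
    exact_mod_cast abs_eval_T_real_le_one ℓ (abs_div_le_one_of_mem_Icc hM hlam)
  · rw [← one_div_div _ (2 : ℝ)]
    exact one_div_le_one_div_of_le (by positivity) hT
  · have hexponent :
        -(2 * (ℓ : ℝ)) * s + 2 * ℓ * (2 * Δ / M) = ℓ * (-(2 * s) + (2 * s) ^ 2) := by
      rw [mul_pow, sq_sqrt (div_nonneg hΔ.le (by linarith))]
      ring
    rw [hexponent, exp_nat_mul, div_eq_mul_inv, ← inv_pow]
    gcongr
    exact inv_one_add_le_exp_neg_add_sq (by positivity)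
end
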